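/- Let G and H be finite connected nontrivial simple graphs of order n₁ and n₂ respectively. Then dim_s(G ⊠ H) ≤ n₂ · dim_s(G) + n₁ · dim_s(H) − dim_s(G) · dim_s(H). -/

import Mathlib

/-!
Distances in `G ⊠ H` are the maxima of the distances in the factors. Hence if
`H.dist b d ≤ G.dist a c` and `w` strongly resolves `a, c` in `G`, then `(w, d)` or `(w, b)`
strongly resolves `(a, b), (c, d)` in `G ⊠ H`, and symmetrically. So `W₁ × V(H) ∪ V(G) × W₂` is a
strong metric generator of `G ⊠ H` for strong metric bases `W₁` of `G` and `W₂` of `H`; its size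
is counted by inclusion–exclusion.
-/

open SimpleGraph Finset

variable {α β : Type*}

/-- The strong product of two simple graphs: distinct vertices `(a,b)` and `(c,d)` are adjacent
iff (`a = c` or `a ~ c`) and (`b = d` or `b ~ d`). -/
def strongProd (G : SimpleGraph α) (H : SimpleGraph β) : SimpleGraph (α × β) where
  Adj x y := x ≠ y ∧ (x.1 = y.1 ∨ G.Adj x.1 y.1) ∧ (x.2 = y.2 ∨ H.Adj x.2 y.2)
  symm := ⟨by
    rintro x y ⟨h1, h2, h3⟩
    exact ⟨h1.symm, h2.imp Eq.symm (fun a => a.symm), h3.imp Eq.symm (fun a => a.symm)⟩⟩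
  loopless := ⟨fun x h => h.1 rfl⟩

/-- The Cartesian sum (disjunctive product) of two simple graphs. -/
def cartSum (G : SimpleGraph α) (H : SimpleGraph β) : SimpleGraph (α × β) where
  Adj x y := x ≠ y ∧ (G.Adj x.1 y.1 ∨ H.Adj x.2 y.2)
  symm := ⟨by
    rintro x y ⟨h1, h2⟩
    exact ⟨h1.symm, h2.imp (fun a => a.symm) (fun a => a.symm)⟩⟩
  loopless := ⟨fun x h => h.1 rfl⟩

/-- `u` is maximally distant from `v` in `G`. -/
def MaximallyDistantFrom (G : SimpleGraph α) (u v : α) : Prop :=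
  ∀ w, G.Adj u w → G.dist v w ≤ G.dist u v

/-- `u` and `v` are mutually maximally distant in `G`. -/
def MutuallyMaximallyDistant (G : SimpleGraph α) (u v : α) : Prop :=
  MaximallyDistantFrom G u v ∧ MaximallyDistantFrom G v u

/-- The strong resolving graph of `G`. -/
def strongResolvingGraph (G : SimpleGraph α) : SimpleGraph α where
  Adj u v := u ≠ v ∧ MutuallyMaximallyDistant G u v
  symm := ⟨by rintro u v ⟨h1, h2, h3⟩; exact ⟨h1.symm, h3, h2⟩⟩
  loopless := ⟨fun x h => h.1 rfl⟩

/-- A finset of vertices is independent if no two of its (distinct) members are adjacent. -/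
def IsIndepFinset (G : SimpleGraph α) (s : Finset α) : Prop :=
  ∀ u ∈ s, ∀ v ∈ s, u ≠ v → ¬ G.Adj u v

/-- The independence number `β(G)`. -/
noncomputable def indepNum (G : SimpleGraph α) [Fintype α] : ℕ :=
  sSup {n | ∃ s : Finset α, IsIndepFinset G s ∧ s.card = n}

/-- `w` strongly resolves `u` and `v` in `G`. -/
def StronglyResolves (G : SimpleGraph α) (w u v : α) : Prop :=
  G.dist w u = G.dist w v + G.dist v u ∨ G.dist w v = G.dist w u + G.dist u v

/-- A strong metric generator for `G`. -/
def IsStrongMetricGenerator (G : SimpleGraph α) (s : Finset α) : Prop :=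
  ∀ u v : α, u ≠ v → ∃ w ∈ s, StronglyResolves G w u v

/-- The strong metric dimension of `G`. -/
noncomputable def sdim (G : SimpleGraph α) [Fintype α] : ℕ :=
  sInf {n | ∃ s : Finset α, IsStrongMetricGenerator G s ∧ s.card = n}

namespace SimpleGraph

variable {V W : Type*} {G : SimpleGraph V}

lemma edist_le_of_forall_edist_succ_le_one (f : ℕ → V) :
    ∀ n : ℕ, (∀ i < n, G.edist (f i) (f (i + 1)) ≤ 1) → G.edist (f 0) (f n) ≤ n
  | 0, _ => by simp
  | n + 1, hf => calc
      G.edist (f 0) (f (n + 1)) ≤ G.edist (f 0) (f n) + G.edist (f n) (f (n + 1)) :=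
        G.edist_triangle
      _ ≤ n + 1 :=
        add_le_add (edist_le_of_forall_edist_succ_le_one f n fun i hi => hf i (by omega))
          (hf n (by omega))

lemma edist_apply_le_of_adj {G' : SimpleGraph W} (f : V → W)
    (hf : ∀ x y, G.Adj x y → G'.edist (f x) (f y) ≤ 1) (x y : V) :
    G'.edist (f x) (f y) ≤ G.edist x y := by
  suffices ∀ {x y : V} (p : G.Walk x y), G'.edist (f x) (f y) ≤ p.length from le_iInf this
  intro x y p
  induction p with
  | nil => simp
  | @cons x z y hxz _ ih => calc
      G'.edist (f x) (f y) ≤ G'.edist (f x) (f z) + G'.edist (f z) (f y) := G'.edist_triangle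
      _ ≤ 1 + _ := add_le_add (hf x z hxz) ih
      _ = _ := by rw [Walk.length_cons, Nat.cast_succ, add_comm]

lemma Walk.edist_getVert_succ_le_one {u v : V} (p : G.Walk u v) (i : ℕ) :
    G.edist (p.getVert i) (p.getVert (i + 1)) ≤ 1 := by
  rw [edist_le_one_iff_adj_or_eq]
  rcases lt_or_ge i p.length with hi | hi
  · exact .inl (p.adj_getVert_succ hi)
  · exact .inr (by rw [p.getVert_of_length_le hi, p.getVert_of_length_le (by omega)])

end SimpleGraph

section StrongProduct

variable {G : SimpleGraph α} {H : SimpleGraph β}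

lemma strongProd_adj_or_eq_iff {x y : α × β} :
    (strongProd G H).Adj x y ∨ x = y ↔
      (G.Adj x.1 y.1 ∨ x.1 = y.1) ∧ (H.Adj x.2 y.2 ∨ x.2 = y.2) := by
  by_cases hxy : x = y
  · simp [hxy]
  · simp only [strongProd, Ne, hxy, not_false_eq_true, true_and, or_false]
    tauto

lemma edist_strongProd_le_one_iff {x y : α × β} :
    (strongProd G H).edist x y ≤ 1 ↔ G.edist x.1 y.1 ≤ 1 ∧ H.edist x.2 y.2 ≤ 1 := by
  simp only [edist_le_one_iff_adj_or_eq, strongProd_adj_or_eq_iff]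

lemma edist_strongProd (a c : α) (b d : β) :
    (strongProd G H).edist (a, b) (c, d) = max (G.edist a c) (H.edist b d) := by
  refine le_antisymm ?_ (max_le ?_ ?_)
  · rcases eq_or_ne (G.edist a c) ⊤ with hac | hac
    · simp [hac]
    rcases eq_or_ne (H.edist b d) ⊤ with hbd | hbd
    · simp [hbd]
    obtain ⟨p, hp⟩ := exists_walk_of_edist_ne_top hac
    obtain ⟨q, hq⟩ := exists_walk_of_edist_ne_top hbd
    -- walk both geodesics in lockstep; the shorter one waits at its endpoint
    have := edist_le_of_forall_edist_succ_le_one (G := strongProd G H)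
      (fun i => (p.getVert i, q.getVert i)) (max p.length q.length) fun i _ =>
        edist_strongProd_le_one_iff.2
        ⟨p.edist_getVert_succ_le_one i, q.edist_getVert_succ_le_one i⟩
    rw [← hp, ← hq, ← Nat.mono_cast.map_max]
    simpa only [p.getVert_zero, q.getVert_zero, p.getVert_of_length_le (le_max_left _ _),
      q.getVert_of_length_le (le_max_right _ _)] using this
  · exact edist_apply_le_of_adj Prod.fst
      (fun x y h => (edist_strongProd_le_one_iff.1 (edist_eq_one_iff_adj.2 h).le).1) (a, b) (c, d)
  · exact edist_apply_le_of_adj Prod.snd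
      (fun x y h => (edist_strongProd_le_one_iff.1 (edist_eq_one_iff_adj.2 h).le).2) (a, b) (c, d)

lemma dist_strongProd {a c : α} {b d : β} (hac : G.Reachable a c) (hbd : H.Reachable b d) :
    (strongProd G H).dist (a, b) (c, d) = max (G.dist a c) (H.dist b d) := by
  rw [SimpleGraph.dist, edist_strongProd, ← hac.coe_dist_eq_edist, ← hbd.coe_dist_eq_edist,
    ← Nat.mono_cast.map_max, ENat.toNat_natCast]

lemma dist_strongProd_swap (a c : α) (b d : β) :
    (strongProd G H).dist (a, b) (c, d) = (strongProd H G).dist (b, a) (d, c) := by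
  simp only [SimpleGraph.dist, edist_strongProd, max_comm]

lemma StronglyResolves.strongProd_left (hG : G.Connected) (hH : H.Connected) {w a c : α}
    {b d : β} (h : StronglyResolves G w a c) (hle : H.dist b d ≤ G.dist a c) :
    ∃ y, StronglyResolves (strongProd G H) (w, y) (a, b) (c, d) := by
  have hba : H.dist d b = H.dist b d := H.dist_comm
  have hca : G.dist c a = G.dist a c := G.dist_comm
  rcases h with h | h
  · refine ⟨d, .inl ?_⟩
    simp only [dist_strongProd (hG _ _) (hH _ _), dist_self]
    omega
  · refine ⟨b, .inr ?_⟩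
    simp only [dist_strongProd (hG _ _) (hH _ _), dist_self]
    omega

lemma StronglyResolves.strongProd_right (hG : G.Connected) (hH : H.Connected) {a c : α}
    {w b d : β} (h : StronglyResolves H w b d) (hle : G.dist a c ≤ H.dist b d) :
    ∃ x, StronglyResolves (strongProd G H) (x, w) (a, b) (c, d) := by
  obtain ⟨x, hx⟩ := h.strongProd_left hH hG hle
  exact ⟨x, by simpa only [StronglyResolves, dist_strongProd_swap (G := G)] using hx⟩

lemma IsStrongMetricGenerator.strongProd [Fintype α] [Fintype β] [DecidableEq α]
    [DecidableEq β] (hG : G.Connected) (hH : H.Connected) {s : Finset α} {t : Finset β}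
    (hs : IsStrongMetricGenerator G s) (ht : IsStrongMetricGenerator H t) :
    IsStrongMetricGenerator (strongProd G H) (s ×ˢ univ ∪ univ ×ˢ t) := by
  rintro ⟨a, b⟩ ⟨c, d⟩ hne
  rcases le_total (H.dist b d) (G.dist a c) with hle | hle
  · have hac : a ≠ c := by
      rintro rfl
      simp_all [hH.dist_eq_zero_iff]
    obtain ⟨w, hw, hres⟩ := hs a c hac
    obtain ⟨y, hy⟩ := hres.strongProd_left hG hH hle
    exact ⟨(w, y), mem_union_left _ (mem_product.2 ⟨hw, mem_univ y⟩), hy⟩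
  · have hbd : b ≠ d := by
      rintro rfl
      simp_all [hG.dist_eq_zero_iff]
    obtain ⟨w, hw, hres⟩ := ht b d hbd
    obtain ⟨x, hx⟩ := hres.strongProd_right hG hH hle
    exact ⟨(x, w), mem_union_right _ (mem_product.2 ⟨mem_univ x, hw⟩), hx⟩

end StrongProduct

lemma card_product_univ_union_univ_product [Fintype α] [Fintype β] [DecidableEq α]
    [DecidableEq β] (s : Finset α) (t : Finset β) :
    #(s ×ˢ univ ∪ univ ×ˢ t) = Fintype.card β * #s + Fintype.card α * #t - #s * #t := by
  have h := card_union_add_card_inter (s ×ˢ (univ : Finset β)) (univ ×ˢ t)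
  rw [product_inter_product, inter_univ, univ_inter] at h
  simp only [card_product, card_univ] at h
  rw [mul_comm (Fintype.card β)]
  omega

section StrongMetricDimension

variable [Fintype α] {G : SimpleGraph α}

lemma sdim_le_card {s : Finset α} (hs : IsStrongMetricGenerator G s) : sdim G ≤ #s :=
  Nat.sInf_le ⟨s, hs, rfl⟩

variable (G) in
lemma exists_isStrongMetricGenerator_card_eq_sdim :
    ∃ s, IsStrongMetricGenerator G s ∧ #s = sdim G :=
  Nat.sInf_mem (s := {n | ∃ s : Finset α, IsStrongMetricGenerator G s ∧ #s = n})
    ⟨_, univ, fun u _ _ => ⟨u, mem_univ u, .inr (by simp)⟩, rfl⟩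

end StrongMetricDimension

theorem sdim_strongProd_upper_bound_general [Fintype α] [Fintype β]
    (G : SimpleGraph α) (H : SimpleGraph β)
    (hG : G.Connected) (hH : H.Connected) :
    sdim (strongProd G H) ≤
      Fintype.card β * sdim G + Fintype.card α * sdim H - sdim G * sdim H := by
  classical
  obtain ⟨s, hs, hs_card⟩ := exists_isStrongMetricGenerator_card_eq_sdim G
  obtain ⟨t, ht, ht_card⟩ := exists_isStrongMetricGenerator_card_eq_sdim H
  calc sdim (strongProd G H)
      ≤ #(s ×ˢ univ ∪ univ ×ˢ t) := sdim_le_card (hs.strongProd hG hH ht)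
    _ = _ := by rw [card_product_univ_union_univ_product, hs_card, ht_card]

theorem sdim_strongProd_upper_bound [Fintype α] [Fintype β]
    (G : SimpleGraph α) (H : SimpleGraph β)
    (hG : G.Connected) (hGn : Nontrivial α) (hH : H.Connected) (hHn : Nontrivial β) :
    sdim (strongProd G H) ≤
      Fintype.card β * sdim G + Fintype.card α * sdim H - sdim G * sdim H :=
  sdim_strongProd_upper_bound_general G H hG hH
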